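/- Let g_1,...,g_N ∈ L²(S²;ℂ), σ_n = ‖g_n‖², σ = ‖Σ g_n‖² > 0, R_n = σ_n/σ. If max_n R_n = 1/N², then R_n = 1/N² for every n = 1,...,N. -/

import Mathlib

/-!
Pass to `L²(S²)`: with `Gₙ` the class of `gₙ`, `σₙ = ‖Gₙ‖²` and `σ = ‖∑ Gₙ‖²`. The hypothesis says
`‖Gₙ‖ ≤ ‖∑ Gₙ‖ / N` for every `n`, while the triangle inequality gives `‖∑ Gₙ‖ ≤ ∑ ‖Gₙ‖`; summing
the `N` bounds therefore leaves no room, and each of them is an equality.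
-/

open MeasureTheory Metric Finset

noncomputable section

abbrev S2 := Metric.sphere (0 : EuclideanSpace ℝ (Fin 3)) 1

/-- The surface measure on the unit sphere `S²` (total mass `4π`). -/
def μS : Measure S2 := MeasureTheory.volume.toSphere

namespace MeasureTheory.MemLp

variable {α E : Type*} [MeasurableSpace α] {μ : Measure α} [NormedAddCommGroup E]

theorem toLp_finset_sum {p : ENNReal} {ι : Type*} (s : Finset ι) {f : ι → α → E}
    (hf : ∀ i, MemLp (f i) p μ) :
    (memLp_finsetSum s fun i _ => hf i).toLp (fun x => ∑ i ∈ s, f i x) =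
      ∑ i ∈ s, (hf i).toLp (f i) := by
  classical
  induction s using Finset.induction with
  | empty => rfl
  | insert i s hi ih =>
    simp only [sum_insert hi, ← ih]
    rfl

theorem norm_toLp_sq {f : α → E} (hf : MemLp f 2 μ) :
    ‖hf.toLp f‖ ^ 2 = ∫ x, ‖f x‖ ^ 2 ∂μ := by
  rw [Lp.norm_toLp, hf.eLpNorm_eq_integral_rpow_norm two_ne_zero ENNReal.ofNat_ne_top,
    ENNReal.toReal_ofReal (by positivity)]
  simp only [ENNReal.toReal_ofNat, Real.rpow_two]
  rw [← Real.rpow_natCast, ← Real.rpow_mul (integral_nonneg fun x => by positivity)]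
  norm_num

end MeasureTheory.MemLp

theorem sq_norm_eq_of_forall_sq_norm_le {ι E : Type*} [Fintype ι] [SeminormedAddCommGroup E]
    {f : ι → E} (h : ∀ i, ‖f i‖ ^ 2 ≤ ‖∑ i, f i‖ ^ 2 / Fintype.card ι ^ 2) (i : ι) :
    ‖f i‖ ^ 2 = ‖∑ i, f i‖ ^ 2 / Fintype.card ι ^ 2 := by
  have : Nonempty ι := ⟨i⟩
  set c := ‖∑ i, f i‖ / Fintype.card ι
  have hle : ∀ j, ‖f j‖ ≤ c := fun j =>
    (sq_le_sq₀ (norm_nonneg _) (by positivity)).1 (by rw [div_pow]; exact h j)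
  have hsum : ∑ j, ‖f j‖ = ∑ _j : ι, c := by
    refine le_antisymm (sum_le_sum fun j _ => hle j) ?_
    calc ∑ _j : ι, c = ‖∑ j, f j‖ := by simp [c, field]
      _ ≤ ∑ j, ‖f j‖ := norm_sum_le _ _
  rw [← div_pow, (sum_eq_sum_iff_of_le fun j _ => hle j).1 hsum i (mem_univ i)]

theorem max_ratio_eq_implies_all_general (N : ℕ)
    (g : Fin N → S2 → ℂ) (hg : ∀ n, MemLp (g n) 2 μS)
    (σn : Fin N → ℝ) (hσn : ∀ n, σn n = ∫ x, ‖g n x‖ ^ 2 ∂μS)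
    (σ : ℝ) (hσ : σ = ∫ x, ‖∑ n, g n x‖ ^ 2 ∂μS) (hσpos : 0 < σ)
    (Rmax : ℝ) (hRmax : IsGreatest (Set.range fun n => σn n / σ) Rmax)
    (hmax : Rmax = 1 / (N : ℝ) ^ 2) :
    ∀ n, σn n / σ = 1 / (N : ℝ) ^ 2 := by
  set G : Fin N → Lp ℂ 2 μS := fun n => (hg n).toLp (g n)
  have hσG : σ = ‖∑ n, G n‖ ^ 2 := by
    rw [hσ, ← MemLp.toLp_finset_sum, MemLp.norm_toLp_sq]
  have hσnG : ∀ n, σn n = ‖G n‖ ^ 2 := fun n => by rw [hσn, MemLp.norm_toLp_sq]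
  have hle : ∀ n, ‖G n‖ ^ 2 ≤ ‖∑ n, G n‖ ^ 2 / Fintype.card (Fin N) ^ 2 := fun n => by
    have hR : σn n / σ ≤ 1 / (N : ℝ) ^ 2 := hmax ▸ hRmax.2 ⟨n, rfl⟩
    rw [div_le_iff₀ hσpos, div_mul_eq_mul_div, one_mul] at hR
    rwa [Fintype.card_fin, ← hσnG, ← hσG]
  intro n
  rw [hσnG, sq_norm_eq_of_forall_sq_norm_le hle n, ← hσG, Fintype.card_fin]
  field_simp

/-- If the maximal ratio `R_n = σ_n/σ` equals `1/N²`, then every ratio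
equals `1/N²`. -/
theorem max_ratio_eq_implies_all (N : ℕ) (hN : 1 ≤ N)
    (g : Fin N → S2 → ℂ) (hg : ∀ n, MemLp (g n) 2 μS)
    (σn : Fin N → ℝ) (hσn : ∀ n, σn n = ∫ x, ‖g n x‖ ^ 2 ∂μS)
    (σ : ℝ) (hσ : σ = ∫ x, ‖∑ n, g n x‖ ^ 2 ∂μS) (hσpos : 0 < σ)
    (Rmax : ℝ) (hRmax : IsGreatest (Set.range fun n => σn n / σ) Rmax)
    (hmax : Rmax = 1 / (N : ℝ) ^ 2) :
    ∀ n, σn n / σ = 1 / (N : ℝ) ^ 2 :=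
  max_ratio_eq_implies_all_general N g hg σn hσn σ hσ hσpos Rmax hRmax hmax

end
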